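/- Let $\omega_1,\dots,\omega_n > 0$ and fix $x \in \mathbb{R}^n$ with $\|x\|_\omega^2 := \sum_i \omega_i^2 x_i^2 < 1$. For $\xi \neq 0$ let $z_\pm(x,\xi)$ be the intersections of the ellipsoid $\{z : \|z\|_\omega = 1\}$ with the rays $\{x + t\xi : t > 0\}$ and $\{x + t\xi : t < 0\}$ respectively. Then for every $k \geq 1$ the function $\xi \mapsto J_k(x,\xi) = \frac{|\xi|^k}{|x - z_+(x,\xi)|^k} + (-1)^k \frac{|\xi|^k}{|x - z_-(x,\xi)|^k}$ is the restriction to $\mathbb{R}^n \setminus \{0\}$ of a polynomial in $\xi = (\xi_1,\dots,\xi_n)$ of degree at most $k$. -/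

import Mathlib

/-!
Writing `z± = x + t± ξ`, the ratio `|ξ| / |x - z±|` is `|t±|⁻¹`, and `t±` are the roots of
`‖x + t ξ‖_ω² = 1`, i.e. of `‖ξ‖_ω² t² + 2⟨x,ξ⟩_ω t - (1 - ‖x‖_ω²) = 0`. Hence
`t±⁻¹ = (⟨x,ξ⟩_ω ± √Δ') / (1 - ‖x‖_ω²)`, the sign `(-1)^k` absorbs `|t₋| = -t₋`, and
`J_k = ((b + √Δ')^k + (b - √Δ')^k) / (1 - ‖x‖_ω²)^k` with `b = ⟨x,ξ⟩_ω`. In the binomial expansion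
the odd powers of `√Δ'` cancel, leaving a polynomial in `b` (degree 1) and `Δ'` (degree 2) of
total degree at most `k`.
-/

/-- Scaled inner product `⟨x,y⟩_ω = ∑ i, ω_i² x_i y_i`. -/
noncomputable def wip {n : ℕ} (ω x y : Fin n → ℝ) : ℝ := ∑ i, (ω i) ^ 2 * x i * y i

/-- The Euclidean norm on `Fin n → ℝ`. -/
noncomputable def euclNorm {n : ℕ} (x : Fin n → ℝ) : ℝ := Real.sqrt (∑ i, (x i) ^ 2)

open Finset MvPolynomial

section EvenBinomialSum

variable {R : Type*} [CommRing R]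

/-- `evenBinomialSum k b d = (b + √d)^k + (b - √d)^k`, written without the square root. -/
def evenBinomialSum (k : ℕ) (b d : R) : R :=
  ∑ j ∈ range (k + 1), (1 + (-1) ^ (k - j)) * (k.choose j : R) * b ^ j * d ^ ((k - j) / 2)

theorem add_pow_add_sub_pow (k : ℕ) (b s : R) :
    (b + s) ^ k + (b - s) ^ k = evenBinomialSum k b (s ^ 2) := by
  rw [sub_eq_add_neg, add_pow, add_pow, ← sum_add_distrib, evenBinomialSum]
  refine sum_congr rfl fun j _ => ?_
  rcases Nat.even_or_odd (k - j) with hev | hodd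
  · rw [hev.neg_pow, hev.neg_one_pow, ← pow_mul, Nat.mul_div_cancel' hev.two_dvd]
    ring
  · rw [hodd.neg_pow, hodd.neg_one_pow]
    ring

theorem map_evenBinomialSum {S : Type*} [CommRing S] (f : R →+* S) (k : ℕ) (b d : R) :
    f (evenBinomialSum k b d) = evenBinomialSum k (f b) (f d) := by
  simp [evenBinomialSum]

theorem totalDegree_evenBinomialSum_le {σ : Type*} (k : ℕ) {B D : MvPolynomial σ R}
    (hB : B.totalDegree ≤ 1) (hD : D.totalDegree ≤ 2) :
    (evenBinomialSum k B D).totalDegree ≤ k := by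
  refine totalDegree_finsetSum_le fun j hj => ?_
  have hjk : j ≤ k := Nat.lt_succ_iff.1 (mem_range.1 hj)
  have hcoeff : ((1 + (-1) ^ (k - j)) * (k.choose j : MvPolynomial σ R)).totalDegree = 0 := by
    simpa using totalDegree_C ((1 + (-1) ^ (k - j)) * (k.choose j : R))
  calc _ ≤ 0 + j * 1 + (k - j) / 2 * 2 := by
        refine (totalDegree_mul _ _).trans (add_le_add ((totalDegree_mul _ _).trans ?_) ?_)
        · exact add_le_add hcoeff.le ((totalDegree_pow _ _).trans (Nat.mul_le_mul_left _ hB))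
        · exact (totalDegree_pow _ _).trans (Nat.mul_le_mul_left _ hD)
    _ ≤ k := by omega

end EvenBinomialSum

section Geometry

variable {n : ℕ}

theorem euclNorm_eq_norm_toLp (x : Fin n → ℝ) :
    euclNorm x = ‖(WithLp.toLp 2 x : EuclideanSpace ℝ (Fin n))‖ := by
  simp [euclNorm, EuclideanSpace.norm_eq]

theorem euclNorm_div_euclNorm_sub_add_smul (x : Fin n → ℝ) {ξ : Fin n → ℝ} (hξ : ξ ≠ 0)
    (t : ℝ) : euclNorm ξ / euclNorm (x - (x + t • ξ)) = |t|⁻¹ := by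
  have hξ' : ‖(WithLp.toLp 2 ξ : EuclideanSpace ℝ (Fin n))‖ ≠ 0 := by simpa using hξ
  rw [sub_add_cancel_left, ← neg_smul, euclNorm_eq_norm_toLp, euclNorm_eq_norm_toLp,
    WithLp.toLp_smul, norm_smul, Real.norm_eq_abs, abs_neg, div_mul_cancel_right₀ hξ']

theorem wip_self_nonneg (ω ξ : Fin n → ℝ) : 0 ≤ wip ω ξ ξ :=
  sum_nonneg fun i _ => by rw [mul_assoc]; exact mul_nonneg (sq_nonneg _) (mul_self_nonneg _)

theorem wip_add_smul_self (ω x ξ : Fin n → ℝ) (t : ℝ) :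
    wip ω (x + t • ξ) (x + t • ξ) = wip ω x x + 2 * t * wip ω x ξ + t ^ 2 * wip ω ξ ξ := by
  simp only [wip, Pi.add_apply, Pi.smul_apply, smul_eq_mul, mul_sum, ← sum_add_distrib]
  exact sum_congr rfl fun i _ => by ring

end Geometry

section QuadraticRoot

variable {a b q t : ℝ}

theorem inv_eq_of_two_mul_add_sq_mul_eq_of_pos (ha : 0 < a) (hq : 0 ≤ q) (ht : 0 < t)
    (h : 2 * t * b + t ^ 2 * q = a) : t⁻¹ = (b + √(b ^ 2 + a * q)) / a := by
  have hinv : a * t⁻¹ = 2 * b + t * q := by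
    rw [← h]; field_simp
  have hroot : √(b ^ 2 + a * q) = b + t * q := by
    have hlin : 0 ≤ b + t * q := by
      nlinarith [mul_pos ha (inv_pos.2 ht), mul_nonneg ht.le hq]
    rw [Real.sqrt_eq_iff_eq_sq (by positivity) hlin, ← h]
    ring
  rw [hroot, eq_div_iff ha.ne', mul_comm, hinv]
  ring

theorem inv_eq_of_two_mul_add_sq_mul_eq_of_neg (ha : 0 < a) (hq : 0 ≤ q) (ht : t < 0)
    (h : 2 * t * b + t ^ 2 * q = a) : t⁻¹ = (b - √(b ^ 2 + a * q)) / a := by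
  have := inv_eq_of_two_mul_add_sq_mul_eq_of_pos ha hq (neg_pos.2 ht) (b := -b)
    (by rw [← h]; ring)
  rw [inv_neg, neg_sq] at this
  linear_combination -this

end QuadraticRoot

section WipPolynomials

variable {n : ℕ}

noncomputable def wipLeftPoly (ω x : Fin n → ℝ) : MvPolynomial (Fin n) ℝ :=
  ∑ i, C (ω i ^ 2 * x i) * X i

noncomputable def wipSelfPoly (ω : Fin n → ℝ) : MvPolynomial (Fin n) ℝ :=
  ∑ i, C (ω i ^ 2) * X i * X i

@[simp]
theorem eval_wipLeftPoly (ω x ξ : Fin n → ℝ) : eval ξ (wipLeftPoly ω x) = wip ω x ξ := by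
  simp [wipLeftPoly, wip]

@[simp]
theorem eval_wipSelfPoly (ω ξ : Fin n → ℝ) : eval ξ (wipSelfPoly ω) = wip ω ξ ξ := by
  simp [wipSelfPoly, wip]

theorem totalDegree_wipLeftPoly_le (ω x : Fin n → ℝ) : (wipLeftPoly ω x).totalDegree ≤ 1 :=
  totalDegree_finsetSum_le fun i _ =>
    (totalDegree_mul _ _).trans (by rw [totalDegree_C, totalDegree_X])

theorem totalDegree_wipSelfPoly_le (ω : Fin n → ℝ) : (wipSelfPoly ω).totalDegree ≤ 2 :=
  totalDegree_finsetSum_le fun i _ =>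
    (totalDegree_mul _ _).trans <| add_le_add
      ((totalDegree_mul _ _).trans (by rw [totalDegree_C, totalDegree_X])) (totalDegree_X i).le

/-- The discriminant `Δ' = ⟨x,ξ⟩_ω² + (1 - ‖x‖_ω²) ‖ξ‖_ω²` as a quadratic form in `ξ`. -/
noncomputable def discrPoly (ω x : Fin n → ℝ) : MvPolynomial (Fin n) ℝ :=
  wipLeftPoly ω x ^ 2 + C (1 - wip ω x x) * wipSelfPoly ω

@[simp]
theorem eval_discrPoly (ω x ξ : Fin n → ℝ) :
    eval ξ (discrPoly ω x) = wip ω x ξ ^ 2 + (1 - wip ω x x) * wip ω ξ ξ := by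
  simp [discrPoly]

theorem totalDegree_discrPoly_le (ω x : Fin n → ℝ) : (discrPoly ω x).totalDegree ≤ 2 :=
  (totalDegree_add _ _).trans <| max_le
    ((totalDegree_pow _ _).trans (by simpa using totalDegree_wipLeftPoly_le ω x))
    ((totalDegree_mul _ _).trans <| by
      rw [totalDegree_C, zero_add]; exact totalDegree_wipSelfPoly_le ω)

end WipPolynomials

theorem stmt6_general {n : ℕ} (ω x : Fin n → ℝ) (hx : wip ω x x < 1)
    (k : ℕ) (zp zm : (Fin n → ℝ) → (Fin n → ℝ))
    (hzp : ∀ ξ : Fin n → ℝ, ξ ≠ 0 →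
      (∃ t > (0:ℝ), zp ξ = x + t • ξ) ∧ wip ω (zp ξ) (zp ξ) = 1)
    (hzm : ∀ ξ : Fin n → ℝ, ξ ≠ 0 →
      (∃ t < (0:ℝ), zm ξ = x + t • ξ) ∧ wip ω (zm ξ) (zm ξ) = 1) :
    ∃ p : MvPolynomial (Fin n) ℝ, p.totalDegree ≤ k ∧
      ∀ ξ : Fin n → ℝ, ξ ≠ 0 →
        euclNorm ξ ^ k / euclNorm (x - zp ξ) ^ k +
          (-1 : ℝ) ^ k * (euclNorm ξ ^ k / euclNorm (x - zm ξ) ^ k) =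
            MvPolynomial.eval ξ p := by
  set a := 1 - wip ω x x
  have ha : 0 < a := sub_pos.2 hx
  refine ⟨C (a ^ k)⁻¹ * evenBinomialSum k (wipLeftPoly ω x) (discrPoly ω x),
    (totalDegree_mul _ _).trans ?_, fun ξ hξ => ?_⟩
  · simpa using totalDegree_evenBinomialSum_le k (totalDegree_wipLeftPoly_le ω x)
      (totalDegree_discrPoly_le ω x)
  have hquad (t : ℝ) (ht : wip ω (x + t • ξ) (x + t • ξ) = 1) :
      2 * t * wip ω x ξ + t ^ 2 * wip ω ξ ξ = a := by
    rw [wip_add_smul_self] at ht; linarith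
  obtain ⟨⟨tp, htp, hzpξ⟩, hp⟩ := hzp ξ hξ
  obtain ⟨⟨tm, htm, hzmξ⟩, hm⟩ := hzm ξ hξ
  rw [hzpξ] at hp ⊢
  rw [hzmξ] at hm ⊢
  have hsign : (-1 : ℝ) ^ k * |tm|⁻¹ ^ k = tm⁻¹ ^ k := by
    rw [abs_of_neg htm, ← mul_pow, inv_neg, neg_one_mul, neg_neg]
  rw [← div_pow, ← div_pow, euclNorm_div_euclNorm_sub_add_smul x hξ,
    euclNorm_div_euclNorm_sub_add_smul x hξ, abs_of_pos htp, hsign,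
    inv_eq_of_two_mul_add_sq_mul_eq_of_pos ha (wip_self_nonneg ω ξ) htp (hquad tp hp),
    inv_eq_of_two_mul_add_sq_mul_eq_of_neg ha (wip_self_nonneg ω ξ) htm (hquad tm hm),
    div_pow, div_pow, ← add_div, add_pow_add_sub_pow,
    Real.sq_sqrt (add_nonneg (sq_nonneg _) (mul_nonneg ha.le (wip_self_nonneg ω ξ)))]
  simp [map_evenBinomialSum, div_eq_inv_mul, a]

theorem stmt6 {n : ℕ} (ω x : Fin n → ℝ) (hω : ∀ i, 0 < ω i) (hx : wip ω x x < 1)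
    (k : ℕ) (hk : 1 ≤ k) (zp zm : (Fin n → ℝ) → (Fin n → ℝ))
    (hzp : ∀ ξ : Fin n → ℝ, ξ ≠ 0 →
      (∃ t > (0:ℝ), zp ξ = x + t • ξ) ∧ wip ω (zp ξ) (zp ξ) = 1)
    (hzm : ∀ ξ : Fin n → ℝ, ξ ≠ 0 →
      (∃ t < (0:ℝ), zm ξ = x + t • ξ) ∧ wip ω (zm ξ) (zm ξ) = 1) :
    ∃ p : MvPolynomial (Fin n) ℝ, p.totalDegree ≤ k ∧
      ∀ ξ : Fin n → ℝ, ξ ≠ 0 →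
        euclNorm ξ ^ k / euclNorm (x - zp ξ) ^ k +
          (-1 : ℝ) ^ k * (euclNorm ξ ^ k / euclNorm (x - zm ξ) ^ k) =
            MvPolynomial.eval ξ p :=
  stmt6_general ω x hx k zp zm hzp hzm
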